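/- The truncated solutions fₙ (defined by fₙ(t) = a₀ + Σ_{(x,y)∈Π, |y|≤n} 1_{(t₀,t]}(x) y^⟨−1/α(fₙ(x₋))⟩) converge in supremum norm to the unique function f ∈ D[t₀,t₁) satisfying f(t) = a₀ + Σ_{(x,y)∈Π} 1_{(t₀,t]}(x) y^⟨−1/α(f(x₋))⟩. -/

import Mathlib

/-
Each jump `y^⟨-1/α(ξ)⟩` is bounded by `wab a b y` and is Lipschitz in `ξ` with constant
`Mconst α * wab a b y`, and `∑ wab a b y < ∞` because `wab a b y = O(|y|^{-1/b'})` for `|y| > 1`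
while all but finitely many atoms have `|y| > 1` or `y = 0` (where `0 ^ s = 0` for `s ≠ 0`). For two solutions whose windows differ by atoms of
total `wab`-weight `ε` (truncations at levels `m ≤ n`, or the full equation twice), the
difference `h = |g₁ - g₂|` therefore satisfies `h(t) ≤ ε + ∑_{x ≤ t} w h(x₋)`, and a Gronwall
inequality for the pure-jump measure `∑ w δ_x` gives `h ≤ 2 ε e^{2 ∑ w}`. Since the truncation
tails tend to `0`, the truncated solutions are uniformly Cauchy; their uniform limit is càdlàg
with left limits the limits of the left limits, dominated convergence passes the equation to the
limit, and uniqueness is the case `ε = 0`.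
-/

open MeasureTheory Filter Set

noncomputable def spow (r s : ℝ) : ℝ := Real.sign r * |r| ^ s

noncomputable def wab (a b y : ℝ) : ℝ :=
  max (|y| ^ (-1 / a) * (1 + abs (Real.log (abs y)))) (|y| ^ (-1 / b) * (1 + abs (Real.log (abs y))))

noncomputable def Mconst (α : ℝ → ℝ) : ℝ := ⨆ ξ : ℝ, |deriv α ξ| / (α ξ) ^ 2

/-- Càdlàg on `[t₀,t₁)`: right-continuous on `[t₀,t₁)` and left limits exist on `(t₀,t₁]`. -/
def CadlagOn (f : ℝ → ℝ) (t₀ t₁ : ℝ) : Prop :=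
  (∀ u ∈ Set.Ico t₀ t₁, Filter.Tendsto f (nhdsWithin u (Set.Ioi u)) (nhds (f u))) ∧
  (∀ u ∈ Set.Ioc t₀ t₁, ∃ L, Filter.Tendsto f (nhdsWithin u (Set.Iio u)) (nhds L))

/-- The sum `∑_{(x,y)∈Λ} 1_{(t₀,t]}(x) y^⟨-1/α(f(x₋))⟩`. -/
noncomputable def jumpSum (α : ℝ → ℝ) (Λ : Set (ℝ × ℝ)) (t₀ t : ℝ) (f : ℝ → ℝ) : ℝ :=
  ∑' p : Λ, if (p : ℝ × ℝ).1 ∈ Set.Ioc t₀ t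
    then spow (p : ℝ × ℝ).2 (-1 / α (Function.leftLim f (p : ℝ × ℝ).1)) else 0

/-- The truncated sum over points with `|y| ≤ n`. -/
noncomputable def jumpSumTrunc (α : ℝ → ℝ) (Λ : Set (ℝ × ℝ)) (n : ℝ) (t₀ t : ℝ) (f : ℝ → ℝ) : ℝ :=
  ∑' p : Λ, if |(p : ℝ × ℝ).2| ≤ n ∧ (p : ℝ × ℝ).1 ∈ Set.Ioc t₀ t
    then spow (p : ℝ × ℝ).2 (-1 / α (Function.leftLim f (p : ℝ × ℝ).1)) else 0

open Topology Function

lemma abs_sign_le_one (r : ℝ) : |Real.sign r| ≤ 1 := by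
  rcases Real.sign_apply_eq r with h | h | h <;> simp [h]

lemma abs_spow_le (r s : ℝ) : |spow r s| ≤ |r| ^ s := by
  rw [spow, abs_mul, abs_of_nonneg (Real.rpow_nonneg (abs_nonneg r) s)]
  exact mul_le_of_le_one_left (Real.rpow_nonneg (abs_nonneg r) s) (abs_sign_le_one r)

lemma abs_spow_sub_spow_le (r s s' : ℝ) : |spow r s - spow r s'| ≤ |(|r| ^ s) - |r| ^ s'| := by
  rw [spow, spow, ← mul_sub, abs_mul]
  exact mul_le_of_le_one_left (abs_nonneg _) (abs_sign_le_one r)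

lemma wab_nonneg (a b y : ℝ) : 0 ≤ wab a b y :=
  le_max_of_le_left (mul_nonneg (Real.rpow_nonneg (abs_nonneg y) _) (by positivity))

lemma rpow_neg_inv_mul_le_wab {a b u : ℝ} (ha : 0 < a) (hu : u ∈ Icc a b) (y : ℝ) :
    |y| ^ (-1 / u) * (1 + abs (Real.log |y|)) ≤ wab a b y := by
  have hu₀ : 0 < u := ha.trans_le hu.1
  rw [wab, ← max_mul_of_nonneg _ _ (by positivity)]
  gcongr
  rcases (abs_nonneg y).eq_or_lt with hy | hy
  · rw [← hy, Real.zero_rpow (by simp [hu₀.ne'])]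
    exact le_max_of_le_left (Real.rpow_nonneg le_rfl _)
  rcases le_or_gt 1 |y| with h1 | h1
  · refine le_max_of_le_right (Real.rpow_le_rpow_of_exponent_le h1 ?_)
    rw [neg_div, neg_div, neg_le_neg_iff]
    exact one_div_le_one_div_of_le hu₀ hu.2
  · refine le_max_of_le_left (Real.rpow_le_rpow_of_exponent_ge hy h1.le ?_)
    rw [neg_div, neg_div, neg_le_neg_iff]
    exact one_div_le_one_div_of_le ha hu.1

lemma bddAbove_abs_deriv_div_sq {α : ℝ → ℝ} {a b C : ℝ} (ha : 0 < a) (hα : ∀ ξ, α ξ ∈ Icc a b)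
    (hC : ∀ ξ, |deriv α ξ| ≤ C) : BddAbove (range fun ξ => |deriv α ξ| / α ξ ^ 2) := by
  refine ⟨C / a ^ 2, forall_mem_range.2 fun ξ => ?_⟩
  have hC₀ : 0 ≤ C := (abs_nonneg _).trans (hC ξ)
  calc |deriv α ξ| / α ξ ^ 2 ≤ C / α ξ ^ 2 := by gcongr; exact hC ξ
    _ ≤ C / a ^ 2 := by gcongr; exact (hα ξ).1

lemma Mconst_nonneg {α : ℝ → ℝ} (hM : BddAbove (range fun ξ => |deriv α ξ| / α ξ ^ 2)) :
    0 ≤ Mconst α :=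
  (div_nonneg (abs_nonneg _) (sq_nonneg _)).trans (le_ciSup hM 0)

lemma abs_spow_neg_inv_comp_sub_le {α : ℝ → ℝ} {a b : ℝ} (ha : 0 < a) (hα : ∀ ξ, α ξ ∈ Icc a b)
    (hdiff : Differentiable ℝ α) (hM : BddAbove (range fun ξ => |deriv α ξ| / α ξ ^ 2))
    (y ξ η : ℝ) :
    |spow y (-1 / α ξ) - spow y (-1 / α η)| ≤ Mconst α * wab a b y * |ξ - η| := by
  have hα₀ : ∀ ξ, 0 < α ξ := fun ξ => ha.trans_le (hα ξ).1
  refine (abs_spow_sub_spow_le _ _ _).trans ?_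
  rcases (abs_nonneg y).eq_or_lt with hy | hy
  · rw [← hy, Real.zero_rpow (by simp [(hα₀ ξ).ne']), Real.zero_rpow (by simp [(hα₀ η).ne']),
      sub_self, abs_zero]
    exact mul_nonneg (mul_nonneg (Mconst_nonneg hM) (wab_nonneg a b y)) (abs_nonneg _)
  have hderiv : ∀ ζ, HasDerivAt (fun ζ => |y| ^ (-1 / α ζ))
      (Real.log |y| * (deriv α ζ / α ζ ^ 2) * |y| ^ (-1 / α ζ)) ζ := by
    intro ζ
    have h := ((hdiff ζ).hasDerivAt.inv (hα₀ ζ).ne').neg.const_rpow hy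
    convert h using 2
    · simp [neg_div]
    · ring
    · simp [neg_div]
  have hbound : ∀ ζ, ‖Real.log |y| * (deriv α ζ / α ζ ^ 2) * |y| ^ (-1 / α ζ)‖
      ≤ Mconst α * wab a b y := by
    intro ζ
    rw [Real.norm_eq_abs, abs_mul, abs_mul, abs_div, abs_of_pos (pow_pos (hα₀ ζ) 2),
      abs_of_nonneg (Real.rpow_nonneg hy.le _)]
    have hlog : abs (Real.log |y|) * (|deriv α ζ| / α ζ ^ 2)
        ≤ Mconst α * (1 + abs (Real.log |y|)) := by
      rw [mul_comm (Mconst α)]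
      gcongr
      · linarith
      · exact le_ciSup hM ζ
    calc _ ≤ Mconst α * (1 + abs (Real.log |y|)) * |y| ^ (-1 / α ζ) := by gcongr
      _ = Mconst α * (|y| ^ (-1 / α ζ) * (1 + abs (Real.log |y|))) := by ring
      _ ≤ Mconst α * wab a b y :=
          mul_le_mul_of_nonneg_left (rpow_neg_inv_mul_le_wab ha (hα ζ) y) (Mconst_nonneg hM)
  simpa [Real.norm_eq_abs] using
    Convex.norm_image_sub_le_of_norm_hasDerivWithin_le (fun ζ _ => (hderiv ζ).hasDerivWithinAt)
      (fun ζ _ => hbound ζ) convex_univ (mem_univ η) (mem_univ ξ)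

lemma rpow_neg_inv_mul_log_le {z c c' : ℝ} (hz : 1 ≤ z) (hc : 0 < c) (hcc' : c < c') :
    z ^ (-1 / c) * (1 + |Real.log z|) ≤ (1 + 1 / (1 / c - 1 / c')) * z ^ (-1 / c') := by
  set δ := 1 / c - 1 / c'
  have hδ : 0 < δ := sub_pos.2 (one_div_lt_one_div_of_lt hc hcc')
  have hz₀ : 0 < z := one_pos.trans_le hz
  have hzδ : 1 ≤ z ^ δ := Real.one_le_rpow hz hδ.le
  have hlog : 1 + |Real.log z| ≤ (1 + 1 / δ) * z ^ δ := by
    rw [abs_of_nonneg (Real.log_nonneg hz), add_mul, one_mul, one_div_mul_eq_div]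
    exact add_le_add hzδ (Real.log_le_rpow_div hz₀.le hδ)
  calc z ^ (-1 / c) * (1 + |Real.log z|) ≤ z ^ (-1 / c) * ((1 + 1 / δ) * z ^ δ) := by gcongr
    _ = (1 + 1 / δ) * z ^ (-1 / c + δ) := by rw [Real.rpow_add hz₀]; ring
    _ = (1 + 1 / δ) * z ^ (-1 / c') := by congr 2; ring

lemma summable_rpow_neg_inv_mul_log {ι : Type*} {y : ι → ℝ} {c c' : ℝ} (hc : 0 < c)
    (hcc' : c < c') (hy : Summable fun i => |y i| ^ (-1 / c')) :
    Summable fun i => |y i| ^ (-1 / c) * (1 + abs (Real.log |y i|)) := by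
  have hc' : -1 / c' < 0 := div_neg_of_neg_of_pos (by norm_num) (hc.trans hcc')
  have hK : 0 ≤ 1 + 1 / (1 / c - 1 / c') :=
    add_nonneg zero_le_one (one_div_nonneg.2 (sub_nonneg.2 (one_div_le_one_div_of_le hc hcc'.le)))
  refine Summable.of_norm_bounded_eventually (hy.mul_left (1 + 1 / (1 / c - 1 / c'))) ?_
  filter_upwards [hy.tendsto_cofinite_zero (Iio_mem_nhds one_pos)] with i hi
  rw [Real.norm_of_nonneg (by positivity)]
  rcases (abs_nonneg (y i)).eq_or_lt with h0 | hpos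
  · rw [← h0, Real.zero_rpow (div_neg_of_neg_of_pos (by norm_num) hc).ne, zero_mul]
    exact mul_nonneg hK (Real.rpow_nonneg le_rfl _)
  · have h1 : 1 < |y i| := by
      rcases (Real.rpow_lt_one_iff_of_pos hpos).1 hi with h | h
      · exact h.1
      · exact absurd h.2 hc'.not_gt
    exact rpow_neg_inv_mul_log_le h1.le hc hcc'

lemma summable_wab {ι : Type*} {y : ι → ℝ} {a b b' : ℝ} (ha : 0 < a) (hb : 0 < b) (hab' : a < b')
    (hbb' : b < b') (hy : Summable fun i => |y i| ^ (-1 / b')) :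
    Summable fun i => wab a b (y i) := by
  refine ((summable_rpow_neg_inv_mul_log ha hab' hy).add
    (summable_rpow_neg_inv_mul_log hb hbb' hy)).of_nonneg_of_le (fun i => wab_nonneg a b _)
    (fun i => ?_)
  exact max_le_add_of_nonneg (by positivity) (by positivity)

lemma tendsto_tsum_indicator_lt_abs {ι : Type*} (y : ι → ℝ) {g : ι → ℝ} (hg : Summable g) :
    Tendsto (fun n : ℕ => ∑' i, {i | (n : ℝ) < |y i|}.indicator g i) atTop (𝓝 0) := by
  simpa using tendsto_tsum_of_dominated_convergence hg.abs (g := fun _ => (0 : ℝ))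
    (fun i => tendsto_const_nhds.congr' <| (eventually_ge_atTop ⌈|y i|⌉₊).mono fun n hn =>
      (indicator_of_notMem (s := {i | (n : ℝ) < |y i|})
        (not_lt.2 ((Nat.le_ceil _).trans (Nat.cast_le.2 hn))) g).symm)
    (Eventually.of_forall fun n i => norm_indicator_le_norm_self _ _)

section Gronwall

variable {ι : Type*} {w x : ι → ℝ}

/-- The mass that the measure `∑ i, w i • δ (x i)` gives to `D`. -/
noncomputable def weightOn (w x : ι → ℝ) (D : Set ℝ) : ℝ := ∑' i, (x ⁻¹' D).indicator w i

lemma weightOn_nonneg (hw : 0 ≤ w) (D : Set ℝ) : 0 ≤ weightOn w x D :=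
  tsum_nonneg fun i => indicator_nonneg (fun i _ => hw i) i

lemma weightOn_mono (hw : 0 ≤ w) (hs : Summable w) {D D' : Set ℝ} (hD : D ⊆ D') :
    weightOn w x D ≤ weightOn w x D' :=
  Summable.tsum_le_tsum (indicator_le_indicator_of_subset (preimage_mono hD) fun i => hw i)
    (hs.indicator _) (hs.indicator _)

lemma weightOn_le_tsum (hw : 0 ≤ w) (hs : Summable w) (D : Set ℝ) :
    weightOn w x D ≤ ∑' i, w i :=
  Summable.tsum_le_tsum (indicator_le_self' fun i _ => hw i) (hs.indicator _) hs

lemma weightOn_Iio_add_weightOn_singleton (hs : Summable w) (u : ℝ) :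
    weightOn w x (Iio u) + weightOn w x {u} = weightOn w x (Iic u) := by
  rw [weightOn, weightOn, weightOn, ← Summable.tsum_add (hs.indicator _) (hs.indicator _),
    ← indicator_union_of_disjoint, ← preimage_union, Iio_union_right]
  exact Disjoint.preimage _ (Set.disjoint_singleton_right.2 (lt_irrefl u))

/-- The discrete analogue of `∫ 2 e^{2G(s₋)} dG(s) ≤ e^{2G(t)} - 1` for `G(t)` the weight of
`(-∞, t]`. Removing the rightmost atoms (at `u`, of weight `m`) costs `2 m e^{2G(u₋)}`, which is
at most `e^{2G(u)} - e^{2G(u₋)}` since `1 + 2m ≤ e^{2m}`. -/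
lemma two_mul_sum_mul_exp_weightOn_Iio_le (hw : 0 ≤ w) (hs : Summable w) (F : Finset ι)
    {D : Set ℝ} (hD : IsLowerSet D) (hF : ∀ i ∈ F, x i ∈ D) :
    2 * ∑ i ∈ F, w i * Real.exp (2 * weightOn w x (Iio (x i)))
      ≤ Real.exp (2 * weightOn w x D) - 1 := by
  induction F using Finset.strongInduction generalizing D with
  | H F ih =>
    rcases F.eq_empty_or_nonempty with rfl | hne
    · simpa using Real.one_le_exp (mul_nonneg zero_le_two (weightOn_nonneg hw D))
    obtain ⟨i₀, hi₀, hmax⟩ := F.exists_max_image x hne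
    set u := x i₀
    set A := weightOn w x (Iio u)
    have hleft := ih (F.filter (x · < u))
      (Finset.filter_ssubset.2 ⟨i₀, hi₀, lt_irrefl u⟩) (isLowerSet_Iio u)
      (fun i hi => (Finset.mem_filter.1 hi).2)
    have hright : ∑ i ∈ F.filter (¬ x · < u), w i * Real.exp (2 * weightOn w x (Iio (x i)))
        ≤ Real.exp (2 * A) * weightOn w x {u} := by
      have hx : ∀ i ∈ F.filter (¬ x · < u), x i = u := fun i hi =>
        le_antisymm (hmax i (Finset.mem_filter.1 hi).1) (not_lt.1 (Finset.mem_filter.1 hi).2)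
      rw [Finset.sum_congr rfl fun i hi => by rw [hx i hi, mul_comm], ← Finset.mul_sum]
      refine mul_le_mul_of_nonneg_left ?_ (Real.exp_pos _).le
      calc ∑ i ∈ F.filter (¬ x · < u), w i
          = ∑ i ∈ F.filter (¬ x · < u), (x ⁻¹' {u}).indicator w i :=
            Finset.sum_congr rfl fun i hi => (indicator_of_mem (s := x ⁻¹' {u}) (hx i hi) w).symm
        _ ≤ weightOn w x {u} :=
            Summable.sum_le_tsum _ (fun i _ => indicator_nonneg (fun i _ => hw i) i)
            (hs.indicator _)
    have hexp : Real.exp (2 * A) * (1 + 2 * weightOn w x {u})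
        ≤ Real.exp (2 * weightOn w x (Iic u)) := by
      rw [← weightOn_Iio_add_weightOn_singleton hs, mul_add 2, Real.exp_add]
      gcongr
      linarith [Real.add_one_le_exp (2 * weightOn w x {u})]
    have hD' : weightOn w x (Iic u) ≤ weightOn w x D :=
      weightOn_mono hw hs (hD.Iic_subset (hF i₀ hi₀))
    rw [← Finset.sum_filter_add_sum_filter_not F (x · < u)]
    have := Real.exp_le_exp.2 (mul_le_mul_of_nonneg_left hD' zero_le_two)
    linarith

lemma two_mul_tsum_mul_exp_weightOn_Iio_le (hw : 0 ≤ w) (hs : Summable w) (t : ℝ) :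
    2 * ∑' i, (x ⁻¹' Iic t).indicator (fun i => w i * Real.exp (2 * weightOn w x (Iio (x i)))) i
      ≤ Real.exp (2 * weightOn w x (Iic t)) - 1 := by
  classical
  rw [← le_div_iff₀' zero_lt_two]
  refine tsum_le_of_sum_le' (div_nonneg (sub_nonneg.2 (Real.one_le_exp
    (mul_nonneg zero_le_two (weightOn_nonneg hw _)))) zero_le_two) fun F => ?_
  rw [le_div_iff₀' zero_lt_two, Finset.sum_indicator_eq_sum_filter]
  exact two_mul_sum_mul_exp_weightOn_Iio_le hw hs _ (isLowerSet_Iic t)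
    fun i hi => (Finset.mem_filter.1 hi).2

lemma two_mul_tsum_indicator_mul_le (hw : 0 ≤ w) (hs : Summable w) {H : ι → ℝ} (hH₀ : 0 ≤ H)
    {c : ℝ} (hc : 0 ≤ c) (hH : ∀ i, H i ≤ c * Real.exp (2 * weightOn w x (Iio (x i)))) (t : ℝ) :
    2 * ∑' i, (x ⁻¹' Iic t).indicator (fun i => w i * H i) i
      ≤ c * (Real.exp (2 * weightOn w x (Iic t)) - 1) := by
  set g := fun i => w i * Real.exp (2 * weightOn w x (Iio (x i)))
  have hg : Summable g := (hs.mul_right (Real.exp (2 * ∑' i, w i))).of_nonneg_of_le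
    (fun i => mul_nonneg (hw i) (Real.exp_pos _).le)
    (fun i => mul_le_mul_of_nonneg_left (Real.exp_le_exp.2 (mul_le_mul_of_nonneg_left
      (weightOn_le_tsum hw hs _) zero_le_two)) (hw i))
  have hHg : ∀ i, w i * H i ≤ c * g i := fun i =>
    (mul_le_mul_of_nonneg_left (hH i) (hw i)).trans_eq (by ring)
  have hsum : ∑' i, (x ⁻¹' Iic t).indicator (fun i => w i * H i) i
      ≤ c * ∑' i, (x ⁻¹' Iic t).indicator g i := by
    have hg' := (hg.mul_left c).indicator (x ⁻¹' Iic t)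
    simp_rw [← tsum_mul_left, ← indicator_mul_right (x ⁻¹' Iic t) (fun _ => c) g]
    exact Summable.tsum_le_tsum (fun i => indicator_le_indicator (hHg i))
      (hg'.of_nonneg_of_le (fun i => indicator_nonneg (fun i _ => mul_nonneg (hw i) (hH₀ i)) i)
        fun i => indicator_le_indicator (hHg i)) hg'
  linarith [mul_le_mul_of_nonneg_left (two_mul_tsum_mul_exp_weightOn_Iio_le (x := x) hw hs t) hc]

/-- Gronwall's inequality for the pure-jump measure `∑ i, w i • δ (x i)`, with `H i` standing for
the left limit `h (x i₋)`. With `G t = weightOn w x (Iic t)`, a bound `h ≤ c e^{2G}` on `[t₀, t₁)`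
improves to `h ≤ (ε + c / 2) e^{2G}`, so iterating from `c = T` gives `h ≤ 2ε e^{2G}`. -/
theorem le_two_mul_exp_of_le_add_tsum {h : ℝ → ℝ} {H : ι → ℝ} {ε T t₀ t₁ : ℝ} (hw : 0 ≤ w)
    (hs : Summable w) (hx : ∀ i, x i < t₁) (hε : 0 ≤ ε) (hT : 0 ≤ T)
    (hhT : ∀ t ∈ Ico t₀ t₁, h t ≤ T) (hH₀ : 0 ≤ H)
    (hH : ∀ i B, (∀ s ∈ Ico t₀ (x i), h s ≤ B) → H i ≤ B)
    (hrec : ∀ t ∈ Ico t₀ t₁, h t ≤ ε + ∑' i, (x ⁻¹' Iic t).indicator (fun i => w i * H i) i) :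
    ∀ t ∈ Ico t₀ t₁, h t ≤ 2 * ε * Real.exp (2 * ∑' i, w i) := by
  set G := fun t => weightOn w x (Iic t)
  have hG₀ : ∀ t, 1 ≤ Real.exp (2 * G t) := fun t =>
    Real.one_le_exp (mul_nonneg zero_le_two (weightOn_nonneg hw _))
  have hstep : ∀ c, 0 ≤ c → (∀ t ∈ Ico t₀ t₁, h t ≤ c * Real.exp (2 * G t)) →
      ∀ t ∈ Ico t₀ t₁, h t ≤ (ε + c / 2) * Real.exp (2 * G t) := by
    intro c hc hhc t ht
    have hHc : ∀ i, H i ≤ c * Real.exp (2 * weightOn w x (Iio (x i))) := fun i =>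
      hH i _ fun s hs' => (hhc s ⟨hs'.1, hs'.2.trans (hx i)⟩).trans <|
        mul_le_mul_of_nonneg_left (Real.exp_le_exp.2 (mul_le_mul_of_nonneg_left
          (weightOn_mono hw hs (Iic_subset_Iio.2 hs'.2)) zero_le_two)) hc
    linarith [hrec t ht, two_mul_tsum_indicator_mul_le hw hs hH₀ hc hHc t,
      mul_le_mul_of_nonneg_left (hG₀ t) hε]
  have hiter : ∀ k : ℕ, ∀ t ∈ Ico t₀ t₁, h t ≤ (2 * ε + T * (1 / 2) ^ k) * Real.exp (2 * G t) := by
    intro k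
    induction k with
    | zero => exact fun t ht => by nlinarith [hhT t ht, hG₀ t]
    | succ k ih =>
      convert hstep _ (by positivity) ih using 3
      ring
  intro t ht
  have hlim : Tendsto (fun k : ℕ => (2 * ε + T * (1 / 2) ^ k) * Real.exp (2 * G t)) atTop
      (𝓝 (2 * ε * Real.exp (2 * G t))) := by
    simpa using ((tendsto_pow_atTop_nhds_zero_of_lt_one (by norm_num : (0:ℝ) ≤ 1 / 2)
      (by norm_num)).const_mul T).const_add (2 * ε) |>.mul_const (Real.exp (2 * G t))
  refine (ge_of_tendsto' hlim fun k => hiter k t ht).trans ?_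
  gcongr
  exact weightOn_le_tsum hw hs _

end Gronwall

lemma UniformCauchySeqOn.exists_tendstoUniformlyOn {ι X β : Type*} [Nonempty ι] [SemilatticeSup ι]
    [UniformSpace β] [CompleteSpace β] [Nonempty β] {F : ι → X → β} {s : Set X}
    (hF : UniformCauchySeqOn F atTop s) : ∃ f, TendstoUniformlyOn F f atTop s :=
  ⟨fun x => limUnder atTop (F · x), hF.tendstoUniformlyOn_of_tendsto fun _ hx =>
    tendsto_nhds_limUnder (cauchySeq_tendsto_of_complete (hF.cauchySeq hx))⟩

lemma uniformCauchySeqOn_of_abs_sub_le {X : Type*} {F : ℕ → X → ℝ} {s : Set X} {e : ℕ → ℝ}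
    (he : Tendsto e atTop (𝓝 0)) (hF : ∀ m n, m ≤ n → ∀ x ∈ s, |F n x - F m x| ≤ e m) :
    UniformCauchySeqOn F atTop s := by
  refine Metric.uniformCauchySeqOn_iff.2 fun δ hδ => ?_
  obtain ⟨N, hN⟩ := eventually_atTop.1 (he.eventually (gt_mem_nhds hδ))
  have key : ∀ m n, N ≤ m → m ≤ n → ∀ x ∈ s, dist (F m x) (F n x) < δ := fun m n hm hmn x hx =>
    (Real.dist_eq _ _ ▸ abs_sub_comm (F m x) (F n x) ▸ hF m n hmn x hx).trans_lt (hN m hm)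
  refine ⟨N, fun m hm n hn x hx => ?_⟩
  rcases le_total m n with hmn | hnm
  · exact key m n hm hmn x hx
  · exact dist_comm (F m x) (F n x) ▸ key n m hn hnm x hx

section Cadlag

variable {t₀ t₁ : ℝ}

lemma CadlagOn.tendsto_leftLim {f : ℝ → ℝ} (hf : CadlagOn f t₀ t₁) {u : ℝ} (hu : u ∈ Ioc t₀ t₁) :
    Tendsto f (𝓝[<] u) (𝓝 (leftLim f u)) := by
  obtain ⟨L, hL⟩ := hf.2 u hu
  rwa [leftLim_eq_of_tendsto hL]

lemma abs_leftLim_sub_le {f g : ℝ → ℝ} (hf : CadlagOn f t₀ t₁) (hg : CadlagOn g t₀ t₁) {u B : ℝ}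
    (hu : u ∈ Ioc t₀ t₁) (hB : ∀ s ∈ Ico t₀ u, |f s - g s| ≤ B) :
    |leftLim f u - leftLim g u| ≤ B :=
  le_of_tendsto ((hf.tendsto_leftLim hu).sub (hg.tendsto_leftLim hu)).abs <|
    eventually_of_mem (Ioo_mem_nhdsLT hu.1) fun s hs => hB s ⟨hs.1.le, hs.2⟩

lemma CadlagOn.of_tendstoUniformlyOn {F : ℕ → ℝ → ℝ} {f : ℝ → ℝ} (hF : ∀ n, CadlagOn (F n) t₀ t₁)
    (hFf : TendstoUniformlyOn F f atTop (Ico t₀ t₁)) :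
    CadlagOn f t₀ t₁ ∧
      ∀ u ∈ Ioc t₀ t₁, Tendsto (fun n => leftLim (F n) u) atTop (𝓝 (leftLim f u)) := by
  have hloc : ∀ {l : Filter ℝ}, Ico t₀ t₁ ∈ l → TendstoUniformlyOnFilter F f atTop l :=
    fun h => hFf.tendstoUniformlyOnFilter.mono_right (le_principal_iff.2 h)
  have hleft : ∀ u ∈ Ioc t₀ t₁, ∃ L, Tendsto (fun n => leftLim (F n) u) atTop (𝓝 L) ∧
      Tendsto f (𝓝[<] u) (𝓝 L) := by
    intro u hu
    have hCauchy : CauchySeq fun n => leftLim (F n) u := by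
      refine Metric.cauchySeq_iff.2 fun δ hδ => ?_
      obtain ⟨N, hN⟩ := Metric.uniformCauchySeqOn_iff.1 hFf.uniformCauchySeqOn (δ / 2) (half_pos hδ)
      refine ⟨N, fun m hm n hn => ?_⟩
      rw [Real.dist_eq]
      refine (abs_leftLim_sub_le (hF m) (hF n) hu fun s hs => ?_).trans_lt (half_lt_self hδ)
      exact (Real.dist_eq _ _ ▸ hN m hm n hn s ⟨hs.1, hs.2.trans_le hu.2⟩).le
    obtain ⟨L, hL⟩ := cauchySeq_tendsto_of_complete hCauchy
    refine ⟨L, hL, (hloc ?_).tendsto_of_eventually_tendsto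
      (Eventually.of_forall fun n => (hF n).tendsto_leftLim hu) hL⟩
    exact mem_of_superset (Ioo_mem_nhdsLT hu.1) fun s hs => ⟨hs.1.le, hs.2.trans_le hu.2⟩
  refine ⟨⟨fun u hu => ?_, fun u hu => (hleft u hu).imp fun L hL => hL.2⟩, fun u hu => ?_⟩
  · refine (hloc ?_).tendsto_of_eventually_tendsto
      (Eventually.of_forall fun n => (hF n).1 u hu) (hFf.tendsto_at hu)
    exact mem_of_superset (Ioo_mem_nhdsGT hu.2) fun s hs => ⟨hu.1.trans hs.1.le, hs.2⟩
  · obtain ⟨L, hL, hfL⟩ := hleft u hu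
    rwa [leftLim_eq_of_tendsto hfL]

end Cadlag

section JumpSums

variable {α : ℝ → ℝ} {a b t₀ t₁ : ℝ} {Λ : Set (ℝ × ℝ)}

/-- The jump `y^⟨-1/α(f(x₋))⟩` that the atom `q = (x, y)` contributes to the path `f`. -/
noncomputable def jumpTerm (α f : ℝ → ℝ) (q : ℝ × ℝ) : ℝ := spow q.2 (-1 / α (leftLim f q.1))

/-- `jumpSum` and `jumpSumTrunc` are the cases `s = (t₀, t] × ℝ` and `s = (t₀, t] × [-n, n]`. -/
noncomputable def jumpSumOn (α : ℝ → ℝ) (Λ s : Set (ℝ × ℝ)) (f : ℝ → ℝ) : ℝ :=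
  ∑' p : Λ, s.indicator (jumpTerm α f) p

lemma jumpSum_eq_jumpSumOn (t : ℝ) (f : ℝ → ℝ) :
    jumpSum α Λ t₀ t f = jumpSumOn α Λ (Prod.fst ⁻¹' Ioc t₀ t) f := by
  classical
  exact tsum_congr fun p => by rw [indicator_apply]; exact if_congr Iff.rfl rfl rfl

lemma jumpSumTrunc_eq_jumpSumOn (n t : ℝ) (f : ℝ → ℝ) :
    jumpSumTrunc α Λ n t₀ t f = jumpSumOn α Λ ({q | |q.2| ≤ n} ∩ Prod.fst ⁻¹' Ioc t₀ t) f := by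
  classical
  exact tsum_congr fun p => by rw [indicator_apply]; exact if_congr Iff.rfl rfl rfl

lemma abs_jumpTerm_le (ha : 0 < a) (hα : ∀ ξ, α ξ ∈ Icc a b) (f : ℝ → ℝ) (q : ℝ × ℝ) :
    |jumpTerm α f q| ≤ wab a b q.2 :=
  (abs_spow_le _ _).trans <| (le_mul_of_one_le_right (Real.rpow_nonneg (abs_nonneg _) _)
    (le_add_of_nonneg_right (abs_nonneg _))).trans (rpow_neg_inv_mul_le_wab ha (hα _) _)

lemma abs_jumpTerm_sub_le (ha : 0 < a) (hα : ∀ ξ, α ξ ∈ Icc a b) (hdiff : Differentiable ℝ α)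
    (hM : BddAbove (range fun ξ => |deriv α ξ| / α ξ ^ 2)) (f g : ℝ → ℝ) (q : ℝ × ℝ) :
    |jumpTerm α f q - jumpTerm α g q| ≤ Mconst α * wab a b q.2 * |leftLim f q.1 - leftLim g q.1| :=
  abs_spow_neg_inv_comp_sub_le ha hα hdiff hM _ _ _

lemma summable_indicator_wab (hwab : Summable fun p : Λ => wab a b (p : ℝ × ℝ).2)
    (s : Set (ℝ × ℝ)) : Summable fun p : Λ => s.indicator (fun q => wab a b q.2) p :=
  hwab.of_nonneg_of_le (fun _ => indicator_nonneg (fun q _ => wab_nonneg a b q.2) _)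
    fun _ => indicator_le_self' (fun q _ => wab_nonneg a b q.2) _

lemma summable_indicator_jumpTerm (ha : 0 < a) (hα : ∀ ξ, α ξ ∈ Icc a b)
    (hwab : Summable fun p : Λ => wab a b (p : ℝ × ℝ).2) (s : Set (ℝ × ℝ)) (f : ℝ → ℝ) :
    Summable fun p : Λ => s.indicator (jumpTerm α f) p :=
  hwab.of_norm_bounded fun _ => (norm_indicator_le_norm_self _ _).trans (abs_jumpTerm_le ha hα f _)

lemma abs_jumpSumOn_le (ha : 0 < a) (hα : ∀ ξ, α ξ ∈ Icc a b)
    (hwab : Summable fun p : Λ => wab a b (p : ℝ × ℝ).2) (s : Set (ℝ × ℝ)) (f : ℝ → ℝ) :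
    |jumpSumOn α Λ s f| ≤ ∑' p : Λ, wab a b (p : ℝ × ℝ).2 :=
  (Real.norm_eq_abs _).symm.trans_le <| tsum_of_norm_bounded hwab.hasSum fun _ =>
    (norm_indicator_le_norm_self _ _).trans (abs_jumpTerm_le ha hα f _)

lemma abs_jumpSumOn_sub_le (ha : 0 < a) (hα : ∀ ξ, α ξ ∈ Icc a b) (hdiff : Differentiable ℝ α)
    (hM : BddAbove (range fun ξ => |deriv α ξ| / α ξ ^ 2))
    (hwab : Summable fun p : Λ => wab a b (p : ℝ × ℝ).2) {s s' : Set (ℝ × ℝ)} (hss' : s' ⊆ s)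
    {f g : ℝ → ℝ} (hfg : Summable fun p : Λ => Mconst α * wab a b (p : ℝ × ℝ).2 *
      |leftLim f (p : ℝ × ℝ).1 - leftLim g (p : ℝ × ℝ).1|) :
    |jumpSumOn α Λ s f - jumpSumOn α Λ s' g|
      ≤ ∑' p : Λ, s'.indicator
          (fun q => Mconst α * wab a b q.2 * |leftLim f q.1 - leftLim g q.1|) p
        + ∑' p : Λ, (s \ s').indicator (fun q => wab a b q.2) p := by
  have hnonneg : ∀ q : ℝ × ℝ, 0 ≤ Mconst α * wab a b q.2 * |leftLim f q.1 - leftLim g q.1| :=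
    fun q => mul_nonneg (mul_nonneg (Mconst_nonneg hM) (wab_nonneg a b _)) (abs_nonneg _)
  have hL : Summable fun p : Λ => s'.indicator
      (fun q => Mconst α * wab a b q.2 * |leftLim f q.1 - leftLim g q.1|) p :=
    hfg.of_nonneg_of_le (fun _ => indicator_nonneg (fun q _ => hnonneg q) _)
      fun _ => indicator_le_self' (fun q _ => hnonneg q) _
  rw [jumpSumOn, jumpSumOn, ← Summable.tsum_sub (summable_indicator_jumpTerm ha hα hwab s f)
    (summable_indicator_jumpTerm ha hα hwab s' g), ← Summable.tsum_add hL
    (summable_indicator_wab hwab _), ← Real.norm_eq_abs]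
  refine tsum_of_norm_bounded (hL.add (summable_indicator_wab hwab _)).hasSum fun p => ?_
  rw [Real.norm_eq_abs]
  by_cases hp' : (p : ℝ × ℝ) ∈ s'
  · simp only [indicator_of_mem hp', indicator_of_mem (hss' hp'),
      indicator_of_notMem (fun h : (p : ℝ × ℝ) ∈ s \ s' => h.2 hp'), add_zero]
    exact abs_jumpTerm_sub_le ha hα hdiff hM f g _
  by_cases hp : (p : ℝ × ℝ) ∈ s
  · simp only [indicator_of_mem hp, indicator_of_notMem hp',
      indicator_of_mem (show (p : ℝ × ℝ) ∈ s \ s' from ⟨hp, hp'⟩), sub_zero, zero_add]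
    exact abs_jumpTerm_le ha hα f _
  · simp only [indicator_of_notMem hp, indicator_of_notMem hp',
      indicator_of_notMem (fun h : (p : ℝ × ℝ) ∈ s \ s' => hp h.1), sub_zero, abs_zero, add_zero,
      le_refl]

end JumpSums

section Stability

variable {α : ℝ → ℝ} {a b t₀ t₁ : ℝ} {Λ : Set (ℝ × ℝ)}

lemma abs_le_of_eq_add_jumpSumOn (ha : 0 < a) (hα : ∀ ξ, α ξ ∈ Icc a b)
    (hwab : Summable fun p : Λ => wab a b (p : ℝ × ℝ).2) {g : ℝ → ℝ} {s : ℝ → Set (ℝ × ℝ)}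
    {a₀ : ℝ} (hg : ∀ t ∈ Ico t₀ t₁, g t = a₀ + jumpSumOn α Λ (s t) g) :
    ∀ t ∈ Ico t₀ t₁, |g t| ≤ |a₀| + ∑' p : Λ, wab a b (p : ℝ × ℝ).2 := fun t ht => by
  rw [hg t ht]
  exact (abs_add_le _ _).trans (by gcongr; exact abs_jumpSumOn_le ha hα hwab _ _)

theorem abs_sub_le_of_eq_add_jumpSumOn (ha : 0 < a) (hα : ∀ ξ, α ξ ∈ Icc a b)
    (hdiff : Differentiable ℝ α) (hM : BddAbove (range fun ξ => |deriv α ξ| / α ξ ^ 2))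
    (hΛ : Λ ⊆ Ioo t₀ t₁ ×ˢ (univ : Set ℝ)) (hwab : Summable fun p : Λ => wab a b (p : ℝ × ℝ).2)
    {g₁ g₂ : ℝ → ℝ} {s₁ s₂ : ℝ → Set (ℝ × ℝ)} {a₀ ε : ℝ}
    (hg₁ : CadlagOn g₁ t₀ t₁) (hg₂ : CadlagOn g₂ t₀ t₁)
    (h₁ : ∀ t ∈ Ico t₀ t₁, g₁ t = a₀ + jumpSumOn α Λ (s₁ t) g₁)
    (h₂ : ∀ t ∈ Ico t₀ t₁, g₂ t = a₀ + jumpSumOn α Λ (s₂ t) g₂)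
    (hs₂₁ : ∀ t, s₂ t ⊆ s₁ t) (hs₂ : ∀ t, s₂ t ⊆ Prod.fst ⁻¹' Iic t)
    (hε : ∀ t, ∑' p : Λ, (s₁ t \ s₂ t).indicator (fun q => wab a b q.2) p ≤ ε) :
    ∀ t ∈ Ico t₀ t₁,
      |g₁ t - g₂ t| ≤ 2 * ε * Real.exp (2 * ∑' p : Λ, Mconst α * wab a b (p : ℝ × ℝ).2) := by
  set V := ∑' p : Λ, wab a b (p : ℝ × ℝ).2
  have hV : 0 ≤ V := tsum_nonneg fun p => wab_nonneg a b _
  have hT : ∀ t ∈ Ico t₀ t₁, |g₁ t - g₂ t| ≤ 2 * (|a₀| + V) := fun t ht => by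
    linarith [abs_sub (g₁ t) (g₂ t), abs_le_of_eq_add_jumpSumOn ha hα hwab h₁ t ht,
      abs_le_of_eq_add_jumpSumOn ha hα hwab h₂ t ht]
  have hΔ : ∀ p : Λ, ∀ B, (∀ s ∈ Ico t₀ (p : ℝ × ℝ).1, |g₁ s - g₂ s| ≤ B) →
      |leftLim g₁ (p : ℝ × ℝ).1 - leftLim g₂ (p : ℝ × ℝ).1| ≤ B := fun p _ =>
    abs_leftLim_sub_le hg₁ hg₂ ⟨(hΛ p.2).1.1, (hΛ p.2).1.2.le⟩
  refine le_two_mul_exp_of_le_add_tsum (x := fun p : Λ => (p : ℝ × ℝ).1)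
    (fun p => mul_nonneg (Mconst_nonneg hM) (wab_nonneg a b _)) (hwab.mul_left _)
    (fun p => (hΛ p.2).1.2) ((tsum_nonneg fun p => indicator_nonneg
      (fun q _ => wab_nonneg a b q.2) _).trans (hε t₀)) (by positivity) hT
    (fun p => abs_nonneg _) hΔ fun t ht => ?_
  have hD : ∀ p : Λ, |leftLim g₁ (p : ℝ × ℝ).1 - leftLim g₂ (p : ℝ × ℝ).1| ≤ 2 * (|a₀| + V) :=
    fun p => hΔ p _ fun s hs => hT s ⟨hs.1, hs.2.trans (hΛ p.2).1.2⟩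
  have hnonneg : ∀ q : ℝ × ℝ, 0 ≤ Mconst α * wab a b q.2 * |leftLim g₁ q.1 - leftLim g₂ q.1| :=
    fun q => mul_nonneg (mul_nonneg (Mconst_nonneg hM) (wab_nonneg a b _)) (abs_nonneg _)
  have hL : Summable fun p : Λ => Mconst α * wab a b (p : ℝ × ℝ).2 *
      |leftLim g₁ (p : ℝ × ℝ).1 - leftLim g₂ (p : ℝ × ℝ).1| :=
    (hwab.mul_left (Mconst α) |>.mul_right (2 * (|a₀| + V))).of_nonneg_of_le (fun _ => hnonneg _)
      fun p => mul_le_mul_of_nonneg_left (hD p) (mul_nonneg (Mconst_nonneg hM) (wab_nonneg a b _))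
  rw [h₁ t ht, h₂ t ht, add_sub_add_left_eq_sub, add_comm ε]
  refine (abs_jumpSumOn_sub_le ha hα hdiff hM hwab (hs₂₁ t) hL).trans
    (add_le_add (Summable.tsum_le_tsum (fun p => ?_) ?_ ?_) (hε t))
  · by_cases hp : (p : ℝ × ℝ) ∈ s₂ t
    · rw [indicator_of_mem hp, indicator_of_mem (s := (fun p : Λ => (p : ℝ × ℝ).1) ⁻¹' Iic t)
        (hs₂ t hp)]
    · rw [indicator_of_notMem hp]
      exact indicator_nonneg (fun (i : Λ) _ => hnonneg i) p
  · exact hL.of_nonneg_of_le (fun _ => indicator_nonneg (fun q _ => hnonneg q) _)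
      fun _ => indicator_le_self' (fun q _ => hnonneg q) _
  · exact hL.indicator _

end Stability

section Solutions

variable {α : ℝ → ℝ} {a b t₀ t₁ : ℝ} {Λ : Set (ℝ × ℝ)}

theorem abs_sub_le_of_eq_add_jumpSumTrunc (ha : 0 < a) (hα : ∀ ξ, α ξ ∈ Icc a b)
    (hdiff : Differentiable ℝ α) (hM : BddAbove (range fun ξ => |deriv α ξ| / α ξ ^ 2))
    (hΛ : Λ ⊆ Ioo t₀ t₁ ×ˢ (univ : Set ℝ)) (hwab : Summable fun p : Λ => wab a b (p : ℝ × ℝ).2)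
    {g₁ g₂ : ℝ → ℝ} {m n a₀ : ℝ} (hmn : m ≤ n) (hg₁ : CadlagOn g₁ t₀ t₁)
    (hg₂ : CadlagOn g₂ t₀ t₁) (h₁ : ∀ t ∈ Ico t₀ t₁, g₁ t = a₀ + jumpSumTrunc α Λ n t₀ t g₁)
    (h₂ : ∀ t ∈ Ico t₀ t₁, g₂ t = a₀ + jumpSumTrunc α Λ m t₀ t g₂) :
    ∀ t ∈ Ico t₀ t₁, |g₁ t - g₂ t| ≤
      2 * (∑' p : Λ, {q : ℝ × ℝ | m < |q.2|}.indicator (fun q => wab a b q.2) p) *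
        Real.exp (2 * ∑' p : Λ, Mconst α * wab a b (p : ℝ × ℝ).2) := by
  refine abs_sub_le_of_eq_add_jumpSumOn ha hα hdiff hM hΛ hwab hg₁ hg₂
    (s₁ := fun t => {q | |q.2| ≤ n} ∩ Prod.fst ⁻¹' Ioc t₀ t)
    (s₂ := fun t => {q | |q.2| ≤ m} ∩ Prod.fst ⁻¹' Ioc t₀ t)
    (fun t ht => by rw [h₁ t ht, jumpSumTrunc_eq_jumpSumOn])
    (fun t ht => by rw [h₂ t ht, jumpSumTrunc_eq_jumpSumOn])
    (fun t => inter_subset_inter_left _ fun q (hq : |q.2| ≤ m) => hq.trans hmn)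
    (fun t => inter_subset_right.trans (preimage_mono Ioc_subset_Iic_self)) fun t => ?_
  refine Summable.tsum_le_tsum (fun p => indicator_le_indicator_of_subset ?_
    (fun q => wab_nonneg a b q.2) _) (summable_indicator_wab hwab _) (summable_indicator_wab hwab _)
  exact fun q hq => show m < |q.2| from lt_of_not_ge fun hqm => hq.2 ⟨hqm, hq.1.2⟩

theorem eqOn_of_eq_add_jumpSum (ha : 0 < a) (hα : ∀ ξ, α ξ ∈ Icc a b)
    (hdiff : Differentiable ℝ α) (hM : BddAbove (range fun ξ => |deriv α ξ| / α ξ ^ 2))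
    (hΛ : Λ ⊆ Ioo t₀ t₁ ×ˢ (univ : Set ℝ)) (hwab : Summable fun p : Λ => wab a b (p : ℝ × ℝ).2)
    {g₁ g₂ : ℝ → ℝ} {a₀ : ℝ} (hg₁ : CadlagOn g₁ t₀ t₁) (hg₂ : CadlagOn g₂ t₀ t₁)
    (h₁ : ∀ t ∈ Ico t₀ t₁, g₁ t = a₀ + jumpSum α Λ t₀ t g₁)
    (h₂ : ∀ t ∈ Ico t₀ t₁, g₂ t = a₀ + jumpSum α Λ t₀ t g₂) :
    EqOn g₁ g₂ (Ico t₀ t₁) := fun t ht => by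
  have h := abs_sub_le_of_eq_add_jumpSumOn ha hα hdiff hM hΛ hwab hg₁ hg₂
    (s₁ := fun t => Prod.fst ⁻¹' Ioc t₀ t) (s₂ := fun t => Prod.fst ⁻¹' Ioc t₀ t)
    (fun t ht => by rw [h₁ t ht, jumpSum_eq_jumpSumOn])
    (fun t ht => by rw [h₂ t ht, jumpSum_eq_jumpSumOn]) (fun t => subset_rfl)
    (fun t => preimage_mono Ioc_subset_Iic_self) (ε := 0) (fun t => by simp) t ht
  rw [mul_zero, zero_mul] at h
  exact sub_eq_zero.1 (abs_nonpos_iff.1 h)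

lemma tendsto_jumpTerm (ha : 0 < a) (hα : ∀ ξ, α ξ ∈ Icc a b)
    (hdiff : Differentiable ℝ α) (hM : BddAbove (range fun ξ => |deriv α ξ| / α ξ ^ 2))
    {ι : Type*} {l : Filter ι} {F : ι → ℝ → ℝ} {f : ℝ → ℝ} {q : ℝ × ℝ}
    (hF : Tendsto (fun i => leftLim (F i) q.1) l (𝓝 (leftLim f q.1))) :
    Tendsto (fun i => jumpTerm α (F i) q) l (𝓝 (jumpTerm α f q)) := by
  rw [tendsto_iff_norm_sub_tendsto_zero]
  refine squeeze_zero (fun _ => norm_nonneg _)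
    (fun i => abs_jumpTerm_sub_le ha hα hdiff hM _ _ q) ?_
  simpa using ((tendsto_iff_norm_sub_tendsto_zero.1 hF).const_mul (Mconst α * wab a b q.2))

theorem tendsto_jumpSumTrunc (ha : 0 < a) (hα : ∀ ξ, α ξ ∈ Icc a b)
    (hdiff : Differentiable ℝ α) (hM : BddAbove (range fun ξ => |deriv α ξ| / α ξ ^ 2))
    (hΛ : Λ ⊆ Ioo t₀ t₁ ×ˢ (univ : Set ℝ)) (hwab : Summable fun p : Λ => wab a b (p : ℝ × ℝ).2)
    {F : ℕ → ℝ → ℝ} {f : ℝ → ℝ}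
    (hF : ∀ u ∈ Ioc t₀ t₁, Tendsto (fun n => leftLim (F n) u) atTop (𝓝 (leftLim f u))) (t : ℝ) :
    Tendsto (fun n : ℕ => jumpSumTrunc α Λ n t₀ t (F n)) atTop (𝓝 (jumpSum α Λ t₀ t f)) := by
  simp_rw [jumpSumTrunc_eq_jumpSumOn, jumpSum_eq_jumpSumOn, jumpSumOn]
  refine tendsto_tsum_of_dominated_convergence hwab (fun p => ?_)
    (Eventually.of_forall fun n p => (norm_indicator_le_norm_self _ _).trans
      (abs_jumpTerm_le ha hα _ _))
  have hp := (hΛ p.2).1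
  by_cases hpt : (p : ℝ × ℝ) ∈ Prod.fst ⁻¹' Ioc t₀ t
  · rw [indicator_of_mem hpt]
    refine (tendsto_jumpTerm ha hα hdiff hM (hF _ ⟨hp.1, hp.2.le⟩)).congr' ?_
    filter_upwards [eventually_ge_atTop ⌈|(p : ℝ × ℝ).2|⌉₊] with n hn
    exact (indicator_of_mem (s := {q : ℝ × ℝ | |q.2| ≤ n} ∩ Prod.fst ⁻¹' Ioc t₀ t)
      ⟨(Nat.le_ceil _).trans (Nat.cast_le.2 hn), hpt⟩ _).symm
  · have h0 : ∀ n : ℕ, ({q : ℝ × ℝ | |q.2| ≤ n} ∩ Prod.fst ⁻¹' Ioc t₀ t).indicator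
        (jumpTerm α (F n)) p = 0 := fun n => indicator_of_notMem (fun h => hpt h.2) _
    simp only [h0, indicator_of_notMem hpt, tendsto_const_nhds]

end Solutions

theorem stmt7_general (a b b' t₀ t₁ a₀ : ℝ) (ha : 0 < a) (hab : a < b) (hbb' : b < b')
    (α : ℝ → ℝ) (hrange : ∀ x, α x ∈ Set.Icc a b) (hsmooth : ContDiff ℝ 1 α)
    (hbd : ∃ C, ∀ x, |deriv α x| ≤ C)
    (Λ : Set (ℝ × ℝ))
    (hsubΛ : Λ ⊆ Set.Ioo t₀ t₁ ×ˢ (Set.univ : Set ℝ))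
    (hΛ : Summable fun p : Λ => |(p : ℝ × ℝ).2| ^ (-1 / b'))
    (F : ℕ → ℝ → ℝ)
    (hF : ∀ n : ℕ, CadlagOn (F n) t₀ t₁ ∧
      ∀ t ∈ Set.Ico t₀ t₁, F n t = a₀ + jumpSumTrunc α Λ n t₀ t (F n)) :
    ∃ f : ℝ → ℝ, CadlagOn f t₀ t₁ ∧
      (∀ t ∈ Set.Ico t₀ t₁, f t = a₀ + jumpSum α Λ t₀ t f) ∧
      TendstoUniformlyOn F f atTop (Set.Ico t₀ t₁) ∧
      ∀ g : ℝ → ℝ, CadlagOn g t₀ t₁ →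
        (∀ t ∈ Set.Ico t₀ t₁, g t = a₀ + jumpSum α Λ t₀ t g) →
        Set.EqOn g f (Set.Ico t₀ t₁) := by
  obtain ⟨C, hC⟩ := hbd
  have hdiff : Differentiable ℝ α := hsmooth.differentiable one_ne_zero
  have hM := bddAbove_abs_deriv_div_sq ha hrange hC
  have hwab : Summable fun p : Λ => wab a b (p : ℝ × ℝ).2 :=
    summable_wab ha (ha.trans hab) (hab.trans hbb') hbb' hΛ
  have hCauchy : UniformCauchySeqOn F atTop (Ico t₀ t₁) := by
    refine uniformCauchySeqOn_of_abs_sub_le ?_ fun m n hmn =>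
      abs_sub_le_of_eq_add_jumpSumTrunc ha hrange hdiff hM hsubΛ hwab (Nat.cast_le.2 hmn)
        (hF n).1 (hF m).1 (hF n).2 (hF m).2
    have h := (tendsto_tsum_indicator_lt_abs (fun p : Λ => (p : ℝ × ℝ).2) hwab).const_mul 2
      |>.mul_const (Real.exp (2 * ∑' p : Λ, Mconst α * wab a b (p : ℝ × ℝ).2))
    rwa [mul_zero, zero_mul] at h
  obtain ⟨f, hFf⟩ := hCauchy.exists_tendstoUniformlyOn
  obtain ⟨hf, hleft⟩ := CadlagOn.of_tendstoUniformlyOn (fun n => (hF n).1) hFf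
  have hfeq : ∀ t ∈ Ico t₀ t₁, f t = a₀ + jumpSum α Λ t₀ t f := fun t ht =>
    tendsto_nhds_unique (hFf.tendsto_at ht) <|
      (tendsto_const_nhds.add (tendsto_jumpSumTrunc ha hrange hdiff hM hsubΛ hwab hleft t)).congr
        fun n => ((hF n).2 t ht).symm
  exact ⟨f, hf, hfeq, hFf, fun g hg hgeq =>
    eqOn_of_eq_add_jumpSum ha hrange hdiff hM hsubΛ hwab hg hf hgeq hfeq⟩

/-- The truncated solutions converge uniformly to the unique solution of the full equation. -/
theorem stmt7 (a b b' t₀ t₁ a₀ : ℝ) (ha : 0 < a) (hab : a < b) (hbb' : b < b') (hb1 : b' < 1)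
    (ht : t₀ < t₁)
    (α : ℝ → ℝ) (hrange : ∀ x, α x ∈ Set.Icc a b) (hsmooth : ContDiff ℝ 1 α)
    (hbd : ∃ C, ∀ x, |deriv α x| ≤ C)
    (Λ : Set (ℝ × ℝ)) (hcount : Λ.Countable)
    (hsubΛ : Λ ⊆ Set.Ioo t₀ t₁ ×ˢ (Set.univ : Set ℝ))
    (hΛ : Summable fun p : Λ => |(p : ℝ × ℝ).2| ^ (-1 / b'))
    (F : ℕ → ℝ → ℝ)
    (hF : ∀ n : ℕ, CadlagOn (F n) t₀ t₁ ∧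
      ∀ t ∈ Set.Ico t₀ t₁, F n t = a₀ + jumpSumTrunc α Λ n t₀ t (F n)) :
    ∃ f : ℝ → ℝ, CadlagOn f t₀ t₁ ∧
      (∀ t ∈ Set.Ico t₀ t₁, f t = a₀ + jumpSum α Λ t₀ t f) ∧
      TendstoUniformlyOn F f atTop (Set.Ico t₀ t₁) ∧
      ∀ g : ℝ → ℝ, CadlagOn g t₀ t₁ →
        (∀ t ∈ Set.Ico t₀ t₁, g t = a₀ + jumpSum α Λ t₀ t g) →
        Set.EqOn g f (Set.Ico t₀ t₁) :=
  stmt7_general a b b' t₀ t₁ a₀ ha hab hbb' α hrange hsmooth hbd Λ hsubΛ hΛ F hF
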